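/- arXiv:1401.0339 — 5 statements merged into one kernel-verified Lean document; each statement's English description precedes it below -/
import Mathlib

section
/- Let U and V be real normed spaces and let a : U × V → ℝ be a semilinear form satisfying the nonlinear inf-sup condition with constant M_a > 0. If u, ũ ∈ U and f, g ∈ V′ are such that a(u; v) = f(v) for all v ∈ V and a(ũ; v) = g(v) for all v ∈ V, then ‖u − ũ‖_U ≤ (1/M_a) ‖f − g‖_{V′}. -/
/-!
The inf-sup condition says that `w ↦ a w` is bounded below as a map `U → V′`:
`M_a ‖w₁ - w₂‖ ≤ ‖a w₁ - a w₂‖`, because each quotient `(a w₁ - a w₂) v / ‖v‖` is at most the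
dual norm. Since `a u = f` and `a u' = g` in `V′`, dividing by `M_a` gives the estimate.
-/

section InfSup

variable {U V : Type*} [NormedAddCommGroup U]
  [NormedAddCommGroup V] [NormedSpace ℝ V]

/-- The nonlinear inf-sup condition `sup_{v ≠ 0} … ≥ M`, stated as: every `c < M` is exceeded
by one of the quotients. -/
def NonlinearInfSup (a : U → V →L[ℝ] ℝ) (M : ℝ) : Prop :=
  ∀ w₁ w₂ : U, w₁ ≠ w₂ → ∀ c : ℝ, c < M →
    ∃ v : V, v ≠ 0 ∧ c < (a w₁ v - a w₂ v) / (‖w₁ - w₂‖ * ‖v‖)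

theorem ContinuousLinearMap.apply_div_mul_norm_le_opNorm_div (φ : V →L[ℝ] ℝ) (v : V) {r : ℝ}
    (hr : 0 ≤ r) : φ v / (r * ‖v‖) ≤ ‖φ‖ / r := by
  rw [mul_comm, ← div_div]
  gcongr
  calc φ v / ‖v‖ ≤ ‖φ v‖ / ‖v‖ := by gcongr; exact Real.le_norm_self _
    _ ≤ ‖φ‖ := φ.ratio_le_opNorm v

theorem NonlinearInfSup.mul_norm_sub_le {a : U → V →L[ℝ] ℝ} {M : ℝ}
    (h : NonlinearInfSup a M) (w₁ w₂ : U) : M * ‖w₁ - w₂‖ ≤ ‖a w₁ - a w₂‖ := by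
  by_cases hw : w₁ = w₂
  · simp [hw]
  have hpos : 0 < ‖w₁ - w₂‖ := norm_pos_iff.2 (sub_ne_zero.2 hw)
  rw [← le_div_iff₀ hpos]
  refine le_of_forall_lt fun c hc => ?_
  obtain ⟨v, -, hv⟩ := h w₁ w₂ hw c hc
  exact hv.trans_le ((a w₁ - a w₂).apply_div_mul_norm_le_opNorm_div v hpos.le)

end InfSup

theorem nonlinear_infSup_apriori_estimate_general
    {U V : Type*}
    [NormedAddCommGroup U]
    [NormedAddCommGroup V] [NormedSpace ℝ V]
    (a : U → V →L[ℝ] ℝ) (Ma : ℝ) (hMa : 0 < Ma)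
    (hinfsup : ∀ w₁ w₂ : U, w₁ ≠ w₂ → ∀ c : ℝ, c < Ma →
      ∃ v : V, v ≠ 0 ∧ c < (a w₁ v - a w₂ v) / (‖w₁ - w₂‖ * ‖v‖))
    (u u' : U) (f g : StrongDual ℝ V)
    (hu : ∀ v : V, a u v = f v) (hu' : ∀ v : V, a u' v = g v) :
    ‖u - u'‖ ≤ (1 / Ma) * ‖f - g‖ := by
  have hf : a u = f := ContinuousLinearMap.ext hu
  have hg : a u' = g := ContinuousLinearMap.ext hu'
  have hbound : Ma * ‖u - u'‖ ≤ ‖f - g‖ := by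
    simpa only [hf, hg] using NonlinearInfSup.mul_norm_sub_le hinfsup u u'
  rwa [one_div, le_inv_mul_iff₀ hMa]

/-- **A priori estimate from the nonlinear inf-sup condition.**
If the semilinear form `a : U → V →L[ℝ] ℝ` satisfies the nonlinear inf-sup condition
with constant `Ma > 0`, and `u, u'` solve the variational problems with data `f, g`
respectively, then `‖u - u'‖ ≤ (1 / Ma) * ‖f - g‖`. -/
theorem nonlinear_infSup_apriori_estimate
    {U V : Type*}
    [NormedAddCommGroup U] [NormedSpace ℝ U]
    [NormedAddCommGroup V] [NormedSpace ℝ V]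
    (a : U → V →L[ℝ] ℝ) (Ma : ℝ) (hMa : 0 < Ma)
    (hinfsup : ∀ w₁ w₂ : U, w₁ ≠ w₂ → ∀ c : ℝ, c < Ma →
      ∃ v : V, v ≠ 0 ∧ c < (a w₁ v - a w₂ v) / (‖w₁ - w₂‖ * ‖v‖))
    (u u' : U) (f g : StrongDual ℝ V)
    (hu : ∀ v : V, a u v = f v) (hu' : ∀ v : V, a u' v = g v) :
    ‖u - u'‖ ≤ (1 / Ma) * ‖f - g‖ :=
  nonlinear_infSup_apriori_estimate_general a Ma hMa hinfsup u u' f g hu hu'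
end

section
/- Let U be a real Banach space and V a real normed space, and let a : U × V → ℝ be a semilinear form that is Lipschitz continuous with constant C_a > 0 and satisfies the nonlinear inf-sup condition with constant M_a > 0. Then the range of the operator A : U → V′, A(w) = a(w; ·), i.e. the set {a(w; ·) : w ∈ U}, is a closed subset of V′. -/
/-!
The inf-sup condition says that `w ↦ a w` is bounded below, `Ma ‖w₁ - w₂‖ ≤ ‖a w₁ - a w₂‖`,
i.e. antilipschitz, while the Lipschitz condition makes it uniformly continuous. A uniformly
continuous antilipschitz map on a complete space has complete, hence closed, range.
-/

theorem AntilipschitzWith.of_mul_dist_le {α β : Type*} [PseudoMetricSpace α]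
    [PseudoMetricSpace β] {f : α → β} {M : ℝ} (hM : 0 < M)
    (h : ∀ x y, M * dist x y ≤ dist (f x) (f y)) : AntilipschitzWith (Real.toNNReal M⁻¹) f :=
  AntilipschitzWith.of_le_mul_dist fun x y => by
    rw [Real.coe_toNNReal _ (inv_nonneg.mpr hM.le), ← div_eq_inv_mul, le_div_iff₀' hM]
    exact h x y

namespace ContinuousLinearMap

variable {V : Type*} [SeminormedAddCommGroup V] [NormedSpace ℝ V]

theorem le_opNorm_of_forall_lt_exists_lt_div (φ : V →L[ℝ] ℝ) {M : ℝ}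
    (h : ∀ c < M, ∃ v, c < φ v / ‖v‖) : M ≤ ‖φ‖ :=
  le_of_forall_lt fun c hc => by
    obtain ⟨v, hv⟩ := h c hc
    calc c < φ v / ‖v‖ := hv
      _ ≤ ‖φ v‖ / ‖v‖ := div_le_div_of_nonneg_right (Real.le_norm_self _) (norm_nonneg v)
      _ ≤ ‖φ‖ := φ.ratio_le_opNorm v

theorem mul_norm_sub_le_norm_sub_of_infSup {U : Type*} [NormedAddCommGroup U]
    (a : U → V →L[ℝ] ℝ) {M : ℝ}
    (h : ∀ w₁ w₂ : U, w₁ ≠ w₂ → ∀ c : ℝ, c < M →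
      ∃ v : V, v ≠ 0 ∧ c < (a w₁ v - a w₂ v) / (‖w₁ - w₂‖ * ‖v‖)) (w₁ w₂ : U) :
    M * ‖w₁ - w₂‖ ≤ ‖a w₁ - a w₂‖ := by
  rcases eq_or_ne w₁ w₂ with rfl | hne
  · simp
  have hr : 0 < ‖w₁ - w₂‖ := norm_pos_iff.mpr (sub_ne_zero.mpr hne)
  have hM : M ≤ ‖‖w₁ - w₂‖⁻¹ • (a w₁ - a w₂)‖ :=
    le_opNorm_of_forall_lt_exists_lt_div _ fun c hc => by
      obtain ⟨v, -, hv⟩ := h w₁ w₂ hne c hc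
      refine ⟨v, hv.trans_eq ?_⟩
      simp only [smul_apply, sub_apply, smul_eq_mul]
      field_simp
  rwa [norm_smul, norm_inv, norm_norm, inv_mul_eq_div, le_div_iff₀ hr] at hM

theorem lipschitzWith_of_sub_apply_le {U : Type*} [SeminormedAddCommGroup U]
    (a : U → V →L[ℝ] ℝ) {C : ℝ} (hC : 0 ≤ C)
    (h : ∀ w₁ w₂ : U, ∀ v : V, a w₁ v - a w₂ v ≤ C * ‖w₁ - w₂‖ * ‖v‖) :
    LipschitzWith (Real.toNNReal C) a :=
  LipschitzWith.of_dist_le' fun w₁ w₂ => by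
    rw [dist_eq_norm, dist_eq_norm]
    refine opNorm_le_bound _ (by positivity) fun v => ?_
    have h₂₁ := h w₂ w₁ v
    rw [norm_sub_rev] at h₂₁
    rw [sub_apply, Real.norm_eq_abs, abs_le]
    constructor <;> linarith [h w₁ w₂ v]

end ContinuousLinearMap

theorem nonlinear_infSup_closed_range_general
    {U V : Type*}
    [NormedAddCommGroup U] [CompleteSpace U]
    [NormedAddCommGroup V] [NormedSpace ℝ V]
    (a : U → V →L[ℝ] ℝ) (Ca Ma : ℝ) (hCa : 0 < Ca) (hMa : 0 < Ma)
    (hLip : ∀ w₁ w₂ : U, ∀ v : V, a w₁ v - a w₂ v ≤ Ca * ‖w₁ - w₂‖ * ‖v‖)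
    (hinfsup : ∀ w₁ w₂ : U, w₁ ≠ w₂ → ∀ c : ℝ, c < Ma →
      ∃ v : V, v ≠ 0 ∧ c < (a w₁ v - a w₂ v) / (‖w₁ - w₂‖ * ‖v‖)) :
    IsClosed (Set.range a) := by
  have hanti : AntilipschitzWith (Real.toNNReal Ma⁻¹) a :=
    AntilipschitzWith.of_mul_dist_le hMa fun w₁ w₂ => by
      simpa only [dist_eq_norm] using
        ContinuousLinearMap.mul_norm_sub_le_norm_sub_of_infSup a hinfsup w₁ w₂
  have hlip := ContinuousLinearMap.lipschitzWith_of_sub_apply_le a hCa.le hLip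
  exact hanti.isClosed_range hlip.uniformContinuous

/-- **Closed range.** Let `U` be a real Banach space, `V` a real normed space, and
`a : U → V →L[ℝ] ℝ` a semilinear form that is Lipschitz continuous with constant
`Ca > 0` and satisfies the nonlinear inf-sup condition with constant `Ma > 0`.
Then the range of the operator `A : U → V′`, `A w = a w`, is a closed subset of `V′`. -/
theorem nonlinear_infSup_closed_range
    {U V : Type*}
    [NormedAddCommGroup U] [NormedSpace ℝ U] [CompleteSpace U]
    [NormedAddCommGroup V] [NormedSpace ℝ V]
    (a : U → V →L[ℝ] ℝ) (Ca Ma : ℝ) (hCa : 0 < Ca) (hMa : 0 < Ma)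
    (hLip : ∀ w₁ w₂ : U, ∀ v : V, a w₁ v - a w₂ v ≤ Ca * ‖w₁ - w₂‖ * ‖v‖)
    (hinfsup : ∀ w₁ w₂ : U, w₁ ≠ w₂ → ∀ c : ℝ, c < Ma →
      ∃ v : V, v ≠ 0 ∧ c < (a w₁ v - a w₂ v) / (‖w₁ - w₂‖ * ‖v‖)) :
    IsClosed (Set.range a) :=
  nonlinear_infSup_closed_range_general a Ca Ma hCa hMa hLip hinfsup
end

section
/- Define F : ℝ² → ℝ² by F(v) = (2 + 1/(1 + |v|)) v, where |·| is the Euclidean norm. Then F is Lipschitz continuous with constant 3 and strongly monotone with constant 2: for all v₁, v₂ ∈ ℝ², |F(v₁) − F(v₂)| ≤ 3 |v₁ − v₂| and (F(v₁) − F(v₂)) · (v₁ − v₂) ≥ 2 |v₁ − v₂|². -/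
/-!
Split `F v = 2 v + G v` with `G v = (1 + |v|)⁻¹ v`; it suffices that `G` is monotone and
`1`-Lipschitz. For radial maps `a • x - b • y` both reduce, via Cauchy–Schwarz `⟪x, y⟫ ≤ |x| |y|`,
to the scalar profile `r ↦ r / (1 + r)`, whose difference quotients lie in `[0, 1]`.
-/

open scoped RealInnerProductSpace

section RadialMaps

variable {E : Type*} [NormedAddCommGroup E] [InnerProductSpace ℝ E]

lemma mul_sub_le_inner_smul_sub_smul (x y : E) {a b : ℝ} (hab : 0 ≤ a + b) :
    (‖x‖ - ‖y‖) * (a * ‖x‖ - b * ‖y‖) ≤ ⟪a • x - b • y, x - y⟫ := by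
  have hxy : ⟪x, y⟫ ≤ ‖x‖ * ‖y‖ := real_inner_le_norm x y
  have hexp : ⟪a • x - b • y, x - y⟫ = a * ‖x‖ ^ 2 - (a + b) * ⟪x, y⟫ + b * ‖y‖ ^ 2 := by
    simp only [inner_sub_left, inner_sub_right, real_inner_smul_left,
      real_inner_self_eq_norm_sq, real_inner_comm x y]
    ring
  rw [hexp]
  nlinarith [mul_le_mul_of_nonneg_left hxy hab]

lemma norm_smul_sub_smul_sq_le (x y : E) {a b : ℝ} (hab : a * b ≤ 1) :
    ‖a • x - b • y‖ ^ 2 ≤ ‖x - y‖ ^ 2 - (‖x‖ - ‖y‖) ^ 2 + (a * ‖x‖ - b * ‖y‖) ^ 2 := by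
  have hxy : ⟪x, y⟫ ≤ ‖x‖ * ‖y‖ := real_inner_le_norm x y
  rw [norm_sub_sq_real, norm_sub_sq_real, norm_smul, norm_smul, real_inner_smul_left,
    real_inner_smul_right, Real.norm_eq_abs, Real.norm_eq_abs]
  nlinarith [mul_le_mul_of_nonneg_left hxy (sub_nonneg.2 hab), sq_abs a, sq_abs b]

lemma div_one_add_sub_div_one_add {r s : ℝ} (hr : 0 ≤ r) (hs : 0 ≤ s) :
    (1 + r)⁻¹ * r - (1 + s)⁻¹ * s = ((1 + r) * (1 + s))⁻¹ * (r - s) := by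
  field_simp
  ring

noncomputable def radialContraction (v : E) : E := (1 + ‖v‖)⁻¹ • v

lemma inner_radialContraction_sub_nonneg (x y : E) :
    0 ≤ ⟪radialContraction x - radialContraction y, x - y⟫ := by
  have hc : 0 ≤ ((1 + ‖x‖) * (1 + ‖y‖))⁻¹ := by positivity
  calc (0 : ℝ) ≤ ((1 + ‖x‖) * (1 + ‖y‖))⁻¹ * (‖x‖ - ‖y‖) ^ 2 := by positivity
    _ = (‖x‖ - ‖y‖) * ((1 + ‖x‖)⁻¹ * ‖x‖ - (1 + ‖y‖)⁻¹ * ‖y‖) := by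
        rw [div_one_add_sub_div_one_add (norm_nonneg x) (norm_nonneg y)]
        ring
    _ ≤ _ := mul_sub_le_inner_smul_sub_smul x y (by positivity)

lemma lipschitzWith_one_radialContraction : LipschitzWith 1 (radialContraction (E := E)) := by
  refine LipschitzWith.of_dist_le_mul fun x y => ?_
  rw [NNReal.coe_one, one_mul, dist_eq_norm, dist_eq_norm]
  set c := ((1 + ‖x‖) * (1 + ‖y‖))⁻¹
  have hc₀ : 0 ≤ c := by positivity
  have hc₁ : c ≤ 1 := inv_le_one_of_one_le₀ (by nlinarith [norm_nonneg x, norm_nonneg y])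
  have hab : (1 + ‖x‖)⁻¹ * (1 + ‖y‖)⁻¹ ≤ 1 := by rw [← mul_inv]; exact hc₁
  refine (pow_le_pow_iff_left₀ (norm_nonneg _) (norm_nonneg _) two_ne_zero).1 ?_
  calc ‖radialContraction x - radialContraction y‖ ^ 2
      ≤ ‖x - y‖ ^ 2 - (‖x‖ - ‖y‖) ^ 2 + (c * (‖x‖ - ‖y‖)) ^ 2 := by
        rw [← div_one_add_sub_div_one_add (norm_nonneg x) (norm_nonneg y)]
        exact norm_smul_sub_smul_sq_le x y hab
    _ ≤ ‖x - y‖ ^ 2 := by nlinarith [sq_nonneg (‖x‖ - ‖y‖), mul_le_one₀ hc₁ hc₀ hc₁]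

end RadialMaps

/-- **Example 1 of the paper.** The map `F : ℝ² → ℝ²`, `F v = (2 + 1/(1 + |v|)) v`,
is Lipschitz continuous with constant `3` and strongly monotone with constant `2`. -/
theorem example1_lipschitz_and_monotone :
    let F : EuclideanSpace ℝ (Fin 2) → EuclideanSpace ℝ (Fin 2) :=
      fun v => (2 + 1 / (1 + ‖v‖)) • v
    (∀ v₁ v₂ : EuclideanSpace ℝ (Fin 2), ‖F v₁ - F v₂‖ ≤ 3 * ‖v₁ - v₂‖) ∧
    (∀ v₁ v₂ : EuclideanSpace ℝ (Fin 2),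
      2 * ‖v₁ - v₂‖ ^ 2 ≤ ⟪F v₁ - F v₂, v₁ - v₂⟫) := by
  intro F
  have hF : ∀ v₁ v₂, F v₁ - F v₂ =
      (2 : ℝ) • (v₁ - v₂) + (radialContraction v₁ - radialContraction v₂) := by
    intro v₁ v₂
    simp only [F, radialContraction, add_smul, one_div]
    module
  refine ⟨fun v₁ v₂ => ?_, fun v₁ v₂ => ?_⟩
  · calc ‖F v₁ - F v₂‖
        ≤ ‖(2 : ℝ) • (v₁ - v₂)‖ + ‖radialContraction v₁ - radialContraction v₂‖ :=
          hF v₁ v₂ ▸ norm_add_le _ _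
      _ ≤ 2 * ‖v₁ - v₂‖ + ‖v₁ - v₂‖ := by
          rw [norm_smul, Real.norm_two, ← dist_eq_norm, ← dist_eq_norm]
          grw [lipschitzWith_one_radialContraction.dist_le_mul v₁ v₂, NNReal.coe_one, one_mul]
      _ = 3 * ‖v₁ - v₂‖ := by ring
  · rw [hF, inner_add_left, real_inner_smul_left, real_inner_self_eq_norm_sq]
    linarith [inner_radialContraction_sub_nonneg v₁ v₂]
end

section
/- Define F : ℝ² → ℝ² by F(v) = (1 + exp(−|v|²)) v, where |·| is the Euclidean norm. Then F is strongly monotone with constant 1 − √(2/e): for all v₁, v₂ ∈ ℝ², (F(v₁) − F(v₂)) · (v₁ − v₂) ≥ (1 − √(2/e)) |v₁ − v₂|². -/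
/-!
Write `F v = v + ψ(|v|) v` with `ψ t = exp (-t²) ≥ 0`. For a radial perturbation of this kind,
Cauchy–Schwarz `⟪v, w⟫ ≤ |v| |w|` reduces the monotonicity defect of `v ↦ ψ(|v|) v` to the
one-dimensional defect `(a - b) (g a - g b)` of `g t = t ψ t` at `a = |v|`, `b = |w|`, and
`(a - b)² ≤ |v - w|²`. The derivative `g' t = (1 - 2t²) e^{-t²} ≥ -2 t² e^{-t²} ≥ -2/e ≥ -√(2/e)`
bounds that defect below by `-√(2/e) (a - b)²`.
-/

open scoped RealInnerProductSpace

open Real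

section Radial

variable {E : Type*} [NormedAddCommGroup E] [InnerProductSpace ℝ E]

theorem neg_mul_norm_sub_sq_le_inner_smul_sub_smul {ψ : ℝ → ℝ} {c : ℝ} (hc : 0 ≤ c)
    (hψ : ∀ t, 0 ≤ t → 0 ≤ ψ t)
    (hg : ∀ a b, 0 ≤ a → 0 ≤ b → -c * (a - b) ^ 2 ≤ (a - b) * (a * ψ a - b * ψ b))
    (v w : E) :
    -c * ‖v - w‖ ^ 2 ≤ ⟪ψ ‖v‖ • v - ψ ‖w‖ • w, v - w⟫ := by
  have hcs : ⟪v, w⟫ ≤ ‖v‖ * ‖w‖ := real_inner_le_norm v w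
  have hψv := hψ ‖v‖ (norm_nonneg v)
  have hψw := hψ ‖w‖ (norm_nonneg w)
  have hscalar := hg ‖v‖ ‖w‖ (norm_nonneg v) (norm_nonneg w)
  have hinner : ⟪ψ ‖v‖ • v - ψ ‖w‖ • w, v - w⟫ =
      ψ ‖v‖ * (‖v‖ ^ 2 - ⟪v, w⟫) + ψ ‖w‖ * (‖w‖ ^ 2 - ⟪v, w⟫) := by
    simp only [inner_sub_left, inner_sub_right, real_inner_smul_left,
      real_inner_self_eq_norm_sq, real_inner_comm v w]
    ring
  rw [hinner, norm_sub_sq_real]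
  nlinarith [mul_nonneg hψv (sub_nonneg.2 hcs), mul_nonneg hψw (sub_nonneg.2 hcs),
    mul_nonneg hc (sub_nonneg.2 hcs)]

end Radial

theorem neg_sqrt_two_div_exp_one_le_one_sub_two_mul_sq_mul_exp (t : ℝ) :
    -√(2 / exp 1) ≤ (1 - 2 * t ^ 2) * exp (-t ^ 2) := by
  have hdecay : t ^ 2 * exp (-t ^ 2) ≤ (exp 1)⁻¹ := by
    simpa [exp_neg] using mul_exp_neg_le_exp_neg_one (t ^ 2)
  have hsqrt : 2 / exp 1 ≤ √(2 / exp 1) :=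
    le_sqrt_self_iff.2 ((div_le_one (exp_pos 1)).2 exp_one_gt_two.le)
  have hexp : 0 ≤ exp (-t ^ 2) := (exp_pos _).le
  calc -√(2 / exp 1) ≤ -(2 * (exp 1)⁻¹) := by rw [← div_eq_mul_inv]; linarith
    _ ≤ -2 * (t ^ 2 * exp (-t ^ 2)) := by linarith
    _ ≤ (1 - 2 * t ^ 2) * exp (-t ^ 2) := by nlinarith

theorem hasDerivAt_mul_exp_neg_sq (t : ℝ) :
    HasDerivAt (fun t : ℝ => t * exp (-t ^ 2)) ((1 - 2 * t ^ 2) * exp (-t ^ 2)) t := by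
  have hsq : HasDerivAt (fun t : ℝ => -t ^ 2) (-(2 * t)) t := by
    simpa using (hasDerivAt_pow 2 t).fun_neg
  exact ((hasDerivAt_id' t).fun_mul hsq.exp).congr_deriv (by ring)

theorem monotone_mul_exp_neg_sq_add_sqrt_two_div_exp_one_mul :
    Monotone (fun t : ℝ => t * exp (-t ^ 2) + √(2 / exp 1) * t) := by
  have hderiv (t : ℝ) :=
    (hasDerivAt_mul_exp_neg_sq t).fun_add ((hasDerivAt_id' t).const_mul (√(2 / exp 1)))
  refine monotone_of_deriv_nonneg (fun t => (hderiv t).differentiableAt) fun t => ?_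
  rw [(hderiv t).deriv]
  linarith [neg_sqrt_two_div_exp_one_le_one_sub_two_mul_sq_mul_exp t]

theorem neg_sqrt_two_div_exp_one_mul_sq_le_sub_mul_sub_mul_exp_neg_sq (a b : ℝ) :
    -√(2 / exp 1) * (a - b) ^ 2 ≤ (a - b) * (a * exp (-a ^ 2) - b * exp (-b ^ 2)) := by
  have hmono := monotone_mul_exp_neg_sq_add_sqrt_two_div_exp_one_mul
  rcases le_total a b with hab | hba
  · nlinarith [hmono hab]
  · nlinarith [hmono hba]

/-- **Example 2 of the paper.** The map `F : ℝ² → ℝ²`, `F v = (1 + exp(−|v|²)) v`,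
is strongly monotone with constant `1 − √(2/e)`. -/
theorem example2_strongly_monotone :
    let F : EuclideanSpace ℝ (Fin 2) → EuclideanSpace ℝ (Fin 2) :=
      fun v => (1 + Real.exp (-‖v‖ ^ 2)) • v
    ∀ v₁ v₂ : EuclideanSpace ℝ (Fin 2),
      (1 - Real.sqrt (2 / Real.exp 1)) * ‖v₁ - v₂‖ ^ 2 ≤ ⟪F v₁ - F v₂, v₁ - v₂⟫ := by
  intro F v₁ v₂
  have hradial := neg_mul_norm_sub_sq_le_inner_smul_sub_smul (ψ := fun t => exp (-t ^ 2))
    (sqrt_nonneg _) (fun t _ => (exp_pos _).le)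
    (fun a b _ _ => neg_sqrt_two_div_exp_one_mul_sq_le_sub_mul_sub_mul_exp_neg_sq a b) v₁ v₂
  have hsplit : F v₁ - F v₂ = (v₁ - v₂) + (exp (-‖v₁‖ ^ 2) • v₁ - exp (-‖v₂‖ ^ 2) • v₂) := by
    simp only [F, add_smul, one_smul]
    abel
  rw [hsplit, inner_add_left, real_inner_self_eq_norm_sq]
  linarith
end

section
/- Let V be a real vector space equipped with two norms ‖·‖ and ‖·‖₊ satisfying ‖v‖ ≤ ‖v‖₊ for all v ∈ V, and let W ⊆ V be a linear subspace on which the two norms are equivalent in the sense that ‖w‖₊ ≤ c ‖w‖ for all w ∈ W, with c > 0. Let N : V × V → ℝ satisfy: (Lipschitz continuity) N(w₁; v) − N(w₂; v) ≤ C ‖w₁ − w₂‖₊ ‖v‖₊ for all w₁, w₂, v ∈ V with C > 0; and (strong monotonicity on W) N(w₁; w₁ − w₂) − N(w₂; w₁ − w₂) ≥ M ‖w₁ − w₂‖² for all w₁, w₂ ∈ W, with M > 0. Suppose u ∈ V and u_h ∈ W satisfy the Galerkin orthogonality N(u; w) = N(u_h; w) for all w ∈ W. Then for every z ∈ W, ‖u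 − u_h‖₊ ≤ (1 + c² C / M) ‖u − z‖₊. -/
/-- **Abstract Céa-type quasi-optimality estimate.**
Let `V` be a real vector space equipped with two norms: the ambient norm `‖·‖`
(playing the role of `‖·‖₊`) and a second norm `nrm` (playing the role of `‖·‖`),
with `nrm v ≤ ‖v‖` on all of `V` and `‖w‖ ≤ c * nrm w` on a subspace `W`.
Suppose `N : V → V → ℝ` is Lipschitz continuous with constant `C > 0` in the norm
`‖·‖` and strongly monotone on `W` with constant `M > 0` in the norm `nrm`, and that
`u : V` and `uh ∈ W` satisfy the Galerkin orthogonality `N u w = N uh w` for all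
`w ∈ W`.  Then for every `z ∈ W`, `‖u - uh‖ ≤ (1 + c² C / M) * ‖u - z‖`. -/
theorem abstract_cea_estimate
    {V : Type*} [NormedAddCommGroup V] [NormedSpace ℝ V]
    (nrm : V → ℝ)
    (hnrm_triangle : ∀ x y : V, nrm (x + y) ≤ nrm x + nrm y)
    (hnrm_smul : ∀ (r : ℝ) (x : V), nrm (r • x) = |r| * nrm x)
    (hnrm_def : ∀ x : V, nrm x = 0 → x = 0)
    (hle : ∀ v : V, nrm v ≤ ‖v‖)
    (W : Submodule ℝ V) (c : ℝ) (hc : 0 < c)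
    (hequiv : ∀ w ∈ W, ‖w‖ ≤ c * nrm w)
    (N : V → V → ℝ) (C M : ℝ) (hC : 0 < C) (hM : 0 < M)
    (hLip : ∀ w₁ w₂ v : V, N w₁ v - N w₂ v ≤ C * ‖w₁ - w₂‖ * ‖v‖)
    (hmono : ∀ w₁ ∈ W, ∀ w₂ ∈ W,
      M * (nrm (w₁ - w₂)) ^ 2 ≤ N w₁ (w₁ - w₂) - N w₂ (w₁ - w₂))
    (u : V) (uh : V) (huh : uh ∈ W)
    (hGalerkin : ∀ w ∈ W, N u w = N uh w) :
    ∀ z ∈ W, ‖u - uh‖ ≤ (1 + c ^ 2 * C / M) * ‖u - z‖ := by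
  intro z hz
  have hfac : (1:ℝ) ≤ 1 + c ^ 2 * C / M := by
    have : 0 ≤ c ^ 2 * C / M := by positivity
    linarith
  set e := uh - z with he
  have heW : e ∈ W := W.sub_mem huh hz
  -- nonnegativity of nrm
  have hnrm0 : nrm (0 : V) = 0 := by
    have := hnrm_smul 0 0
    simpa using this
  have hnn : ∀ x : V, 0 ≤ nrm x := by
    intro x
    have hneg : nrm (-x) = nrm x := by
      have := hnrm_smul (-1) x
      simpa using this
    have := hnrm_triangle x (-x)
    simp [hnrm0, hneg] at this
    linarith
  rcases eq_or_lt_of_le (hnn e) with h0 | hpos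
  · have : e = 0 := hnrm_def e h0.symm
    have : uh = z := by
      have := sub_eq_zero.mp (he ▸ this)
      exact this
    rw [this]
    nlinarith [norm_nonneg (u - z)]
  · -- main chain
    have hchain : M * (nrm e) ^ 2 ≤ C * ‖u - z‖ * (c * nrm e) := by
      have h1 : M * (nrm e) ^ 2 ≤ N uh e - N z e := by
        have := hmono uh huh z hz
        simpa [he] using this
      have h2 : N uh e - N z e = N u e - N z e := by
        rw [hGalerkin e heW]
      have h3 : N u e - N z e ≤ C * ‖u - z‖ * ‖e‖ := hLip u z e
      have h4 : C * ‖u - z‖ * ‖e‖ ≤ C * ‖u - z‖ * (c * nrm e) := by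
        have := hequiv e heW
        have hcz : 0 ≤ C * ‖u - z‖ := by positivity
        nlinarith
      linarith
    have hnrme : nrm e ≤ c * C / M * ‖u - z‖ := by
      rw [div_mul_eq_mul_div, le_div_iff₀ hM]
      nlinarith
    have hne : ‖e‖ ≤ c ^ 2 * C / M * ‖u - z‖ := by
      have := hequiv e heW
      have : ‖e‖ ≤ c * (c * C / M * ‖u - z‖) := by nlinarith
      calc ‖e‖ ≤ c * (c * C / M * ‖u - z‖) := this
        _ = c ^ 2 * C / M * ‖u - z‖ := by ring
    have htri : ‖u - uh‖ ≤ ‖u - z‖ + ‖e‖ := by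
      have : u - uh = (u - z) - e := by rw [he]; abel
      rw [this]
      exact norm_sub_le _ _
    calc ‖u - uh‖ ≤ ‖u - z‖ + ‖e‖ := htri
      _ ≤ ‖u - z‖ + c ^ 2 * C / M * ‖u - z‖ := by linarith
      _ = (1 + c ^ 2 * C / M) * ‖u - z‖ := by ring
end
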